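/- arXiv:2601.12077 — 2 statements merged into one kernel-verified Lean document; each statement's English description precedes it below -/
import Mathlib

section
/- Lemma 2.3 (variation of the unit normal under boundary perturbation): Let n ≥ 1. Let φ : ℝⁿ → ℝ be C² and let U ⊆ ℝⁿ be an open set on which ‖∇φ(x)‖ = 1; write ν = ∇φ. Let ε > 0 and let h : ℝⁿ × (−ε, ε) → ℝⁿ be C² with h(x, 0) = x for all x ∈ ℝⁿ, and suppose that for every (x, t) the partial Fréchet derivative D_x h(x, t) : ℝⁿ → ℝⁿ (derivative in the first variable) is invertible. Let g : ℝⁿ × (−ε, ε) → ℝⁿ be C¹ with g(h(x, t), t) = x for all (x, t). Set ḣ(x) = ∂_t h(x, 0) and define σ : ℝⁿ → ℝ by σ(x) = ⟨ḣ(x), ν(x)⟩. For (x, t) with ν(x) ≠ 0 define N(x, t) = w(x, t)/‖w(x, t)‖, where w(x, t) = ((D_x h(x, t))^*)⁻¹(ν(x)) and * denotes the adjoint with respect to the Euclidean inner product. Then for every x ∈ U, the curve t ↦ N(g(x, t), t), which is defined for all t in a neighborhood of 0, is differentiable at t = 0 and its derivative at t = 0 equals −(∇σ(x) − ⟨∇σ(x),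 ν(x)⟩ ν(x)), that is, minus the tangential gradient of σ relative to the level set of φ through x. -/
/-!
Along the inverse flow `γ t = g (x, t)` one has `γ' 0 = -ḣ x`. The Jacobian
`A t = Dₓh (γ t, t)` satisfies `A 0 = 1` and, because mixed second partials of `h` commute and
`h (·, 0) = id` kills `Dₓ²h (x, 0)`, also `A' 0 = Dḣ x` whatever the velocity of `γ`. Hence the
unnormalized normal `(A t*)⁻¹ ν (γ t)` has derivative `-(Dḣ x)* ν x - ∇²φ x (ḣ x)`, which is
`-∇σ x` because the Hessian of `φ` is self-adjoint. Normalizing a curve of unit vectors removes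
the normal component of its derivative.
-/

open Set Filter Topology ContinuousLinearMap
open scoped RealInnerProductSpace

theorem HasDerivAt.norm_inv_smul_of_norm_eq_one {E : Type*} [NormedAddCommGroup E]
    [InnerProductSpace ℝ E] {W : ℝ → E} {W' : E} {t : ℝ} (hW : HasDerivAt W W' t)
    (h1 : ‖W t‖ = 1) :
    HasDerivAt (fun s => ‖W s‖⁻¹ • W s) (W' - ⟪W t, W'⟫ • W t) t := by
  have hnorm : HasDerivAt (fun s => ‖W s‖) ⟪W t, W'⟫ t := by
    have := (Real.hasDerivAt_sqrt (by simp [h1])).comp t hW.norm_sq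
    simpa [Function.comp_def, Real.sqrt_sq (norm_nonneg _), h1] using this
  simpa [h1, sub_eq_add_neg, neg_smul] using (hnorm.fun_inv (by simp [h1])).fun_smul hW

theorem HasDerivAt.ringInverse {𝕜 R : Type*} [NontriviallyNormedField 𝕜] [NormedRing R]
    [NormedAlgebra 𝕜 R] [CompleteSpace R] {B : 𝕜 → R} {B' : R} {t : 𝕜} (hB : HasDerivAt B B' t)
    (u : Rˣ) (hu : B t = u) :
    HasDerivAt (fun s => Ring.inverse (B s)) (-(↑u⁻¹ * B' * ↑u⁻¹)) t := by
  simpa [mulLeftRight_apply, Function.comp_def] using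
    (hasFDerivAt_ringInverse (𝕜 := 𝕜) u).comp_hasDerivAt_of_eq t hB hu.symm

theorem HasDerivAt.ringInverse_adjoint_apply {E : Type*} [NormedAddCommGroup E]
    [InnerProductSpace ℝ E] [CompleteSpace E] {A : ℝ → E →L[ℝ] E} {L : E →L[ℝ] E}
    {v : ℝ → E} {v' : E} {t : ℝ} (hA : HasDerivAt A L t) (hA1 : A t = 1)
    (hv : HasDerivAt v v' t) :
    HasDerivAt (fun s => Ring.inverse (adjoint (A s)) (v s)) (v' - adjoint L (v t)) t := by
  have hstar : star (A t) = 1 := by rw [hA1, star_one]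
  have hinv := hA.star.ringInverse 1 hstar
  simp only [← star_eq_adjoint]
  convert hinv.clm_apply hv using 1
  simp [hstar, sub_eq_neg_add]

namespace InnerProductSpace
variable {E : Type*} [NormedAddCommGroup E] [InnerProductSpace ℝ E] [CompleteSpace E]

/-- `(toDual ℝ E).symm` is typed as conjugate-linear; over `ℝ` it is an honest linear map. -/
noncomputable def toDualSymmCLM : StrongDual ℝ E →L[ℝ] E :=
  { (toDual ℝ E).symm with
    map_smul' := fun c f => by simp
    cont := (toDual ℝ E).symm.continuous }

@[simp]
theorem toDualSymmCLM_apply (f : StrongDual ℝ E) : toDualSymmCLM f = (toDual ℝ E).symm f := rfl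

end InnerProductSpace

open InnerProductSpace

section Hessian
variable {E : Type*} [NormedAddCommGroup E] [InnerProductSpace ℝ E] [CompleteSpace E]
  {φ : E → ℝ} {x : E}

noncomputable def hessian (φ : E → ℝ) (x : E) : E →L[ℝ] E :=
  toDualSymmCLM.comp (fderiv ℝ (fderiv ℝ φ) x)

theorem inner_hessian_apply (u v : E) :
    ⟪hessian φ x u, v⟫ = fderiv ℝ (fderiv ℝ φ) x u v := by
  simp [hessian]

theorem ContDiffAt.hasFDerivAt_gradient (hφ : ContDiffAt ℝ 2 φ x) :
    HasFDerivAt (gradient φ) (hessian φ x) x :=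
  toDualSymmCLM.hasFDerivAt.comp x
    ((hφ.fderiv_right le_rfl).differentiableAt one_ne_zero).hasFDerivAt

theorem ContDiffAt.isSelfAdjoint_hessian (hφ : ContDiffAt ℝ 2 φ x) :
    IsSelfAdjoint (hessian φ x) := by
  rw [isSelfAdjoint_iff_isSymmetric]
  intro u v
  simp only [coe_coe]
  rw [inner_hessian_apply, real_inner_comm, inner_hessian_apply,
    hφ.isSymmSndFDerivAt (by simp)]

theorem HasFDerivAt.hasGradientAt_inner_gradient {V : E → E} {L : E →L[ℝ] E}
    (hV : HasFDerivAt V L x) (hφ : ContDiffAt ℝ 2 φ x) :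
    HasGradientAt (fun y => ⟪V y, gradient φ y⟫)
      (adjoint L (gradient φ x) + hessian φ x (V x)) x := by
  rw [hasGradientAt_iff_hasFDerivAt]
  refine (hV.inner ℝ hφ.hasFDerivAt_gradient).congr_fderiv ?_
  ext v
  have hsymm := hφ.isSelfAdjoint_hessian.isSymmetric (V x) v
  simp only [coe_coe] at hsymm
  simp [adjoint_inner_left, fderivInnerCLM_apply, hsymm, add_comm]

end Hessian

section Slices
variable {𝕜 E F : Type*} [NontriviallyNormedField 𝕜] [NormedAddCommGroup E]
  [NormedSpace 𝕜 E] [NormedAddCommGroup F] [NormedSpace 𝕜 F] {h : E × 𝕜 → F}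
  {D : E × 𝕜 →L[𝕜] F} {y : E} {t : 𝕜}

theorem HasFDerivAt.slice_left (hh : HasFDerivAt h D (y, t)) :
    HasFDerivAt (fun y' => h (y', t)) (D.comp (inl 𝕜 E 𝕜)) y :=
  hh.comp y (hasFDerivAt_prodMk_left y t)

theorem HasFDerivAt.hasDerivAt_slice_right (hh : HasFDerivAt h D (y, t)) :
    HasDerivAt (fun t' => h (y, t')) (D (0, 1)) t :=
  hh.comp_hasDerivAt t ((hasDerivAt_const t y).prodMk (hasDerivAt_id t))

end Slices

theorem ContDiffAt.eventually_differentiableAt {𝕜 E F : Type*} [NontriviallyNormedField 𝕜]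
    [NormedAddCommGroup E] [NormedSpace 𝕜 E] [NormedAddCommGroup F] [NormedSpace 𝕜 F]
    {f : E → F} {x : E} {n : WithTop ℕ∞} (hf : ContDiffAt 𝕜 n f x) (hn : 1 ≤ n) :
    ∀ᶠ y in 𝓝 x, DifferentiableAt 𝕜 f y :=
  ((hf.of_le hn).eventually (by simp)).mono fun _ hy => hy.differentiableAt one_ne_zero

section Families
variable {E F : Type*} [NormedAddCommGroup E] [NormedSpace ℝ E] [NormedAddCommGroup F]
  [NormedSpace ℝ F] {x : E}

theorem hasDerivAt_inverseFamily {g h : E × ℝ → E} {v : E}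
    (hg : DifferentiableAt ℝ g (x, 0)) (hg0 : ∀ y, g (y, 0) = y)
    (hh : HasDerivAt (fun t => h (x, t)) v 0) (hh0 : h (x, 0) = x)
    (hgh : ∀ᶠ t in 𝓝 0, g (h (x, t), t) = x) :
    HasDerivAt (fun t => g (x, t)) (-v) 0 := by
  obtain ⟨D, hD⟩ := hg
  have hD_inl : ∀ u, D (u, 0) = u := by
    have hid : D.comp (inl ℝ E ℝ) = .id ℝ E :=
      hD.slice_left.unique (by rw [funext hg0]; exact hasFDerivAt_id x)
    exact fun u => congr($hid u)
  have hD_flow : D (v, 1) = 0 := by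
    have hchain : HasDerivAt (fun t => g (h (x, t), t)) (D (v, 1)) 0 :=
      hD.comp_hasDerivAt_of_eq 0 (hh.prodMk (hasDerivAt_id 0)) (by rw [hh0])
    exact hchain.unique ((hasDerivAt_const 0 x).congr_of_eventuallyEq hgh)
  have hD_time : D (0, 1) = -v := by
    have : ((0 : E), (1 : ℝ)) = (v, 1) - (v, 0) := by simp
    rw [this, map_sub, hD_flow, hD_inl, zero_sub]
  exact hD_time ▸ hD.hasDerivAt_slice_right

theorem ContDiffAt.hasFDerivAt_deriv_slice_right {h : E × ℝ → F}
    (hh : ContDiffAt ℝ 2 h (x, 0)) :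
    HasFDerivAt (fun y => deriv (fun t => h (y, t)) 0)
      ((apply ℝ F ((0 : E), (1 : ℝ))).comp ((fderiv ℝ (fderiv ℝ h) (x, 0)).comp (inl ℝ E ℝ)))
      x := by
  have hD2 : HasFDerivAt (fderiv ℝ h) (fderiv ℝ (fderiv ℝ h) (x, 0)) (x, 0) :=
    ((hh.fderiv_right le_rfl).differentiableAt one_ne_zero).hasFDerivAt
  have hslice : ∀ᶠ y in 𝓝 x, deriv (fun t => h (y, t)) 0 = fderiv ℝ h (y, 0) (0, 1) :=
    ((continuousAt_id.prodMk continuousAt_const).eventually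
      (hh.eventually_differentiableAt one_le_two)).mono
      fun y hy => hy.hasFDerivAt.hasDerivAt_slice_right.deriv
  have hD2_slice : HasFDerivAt (fun y => fderiv ℝ h (y, 0) (0, 1)) _ x :=
    (apply ℝ F ((0 : E), (1 : ℝ))).hasFDerivAt.comp x hD2.slice_left
  exact hD2_slice.congr_of_eventuallyEq hslice

theorem ContDiffAt.hasDerivAt_fderiv_slice_left_comp {h : E × ℝ → E}
    (hh : ContDiffAt ℝ 2 h (x, 0)) (hh0 : ∀ y, h (y, 0) = y)
    {γ : ℝ → E} {γ' : E} (hγ : HasDerivAt γ γ' 0) (hγ0 : γ 0 = x) :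
    HasDerivAt (fun t => fderiv ℝ (fun y => h (y, t)) (γ t))
      (fderiv ℝ (fun y => deriv (fun t => h (y, t)) 0) x) 0 := by
  set D2 := fderiv ℝ (fderiv ℝ h) (x, 0)
  have hD2 : HasFDerivAt (fderiv ℝ h) D2 (x, 0) :=
    ((hh.fderiv_right le_rfl).differentiableAt one_ne_zero).hasFDerivAt
  have hdiff := hh.eventually_differentiableAt one_le_two
  let restrict : (E × ℝ →L[ℝ] E) →L[ℝ] (E →L[ℝ] E) := (compL ℝ E (E × ℝ) E).flip (inl ℝ E ℝ)
  have hD2_inl_inl : ∀ u v, D2 (u, 0) (v, 0) = 0 := by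
    have hconst : (fun y => restrict (fderiv ℝ h (y, 0))) =ᶠ[𝓝 x] fun _ => .id ℝ E := by
      filter_upwards [(continuousAt_id.prodMk continuousAt_const).eventually hdiff]
        with y (hy : DifferentiableAt ℝ h (y, 0))
      show (fderiv ℝ h (y, 0)).comp (inl ℝ E ℝ) = _
      rw [← hy.hasFDerivAt.slice_left.fderiv, funext hh0, fderiv_fun_id]
    have hzero := (restrict.hasFDerivAt.comp x hD2.slice_left).unique
      ((hasFDerivAt_const _ x).congr_of_eventuallyEq hconst)
    exact fun u v => congr($hzero u v)
  have hslices : (fun t => restrict (fderiv ℝ h (γ t, t))) =ᶠ[𝓝 0]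
      fun t => fderiv ℝ (fun y => h (y, t)) (γ t) := by
    have hcurve : ContinuousAt (fun t => (γ t, t)) 0 := hγ.continuousAt.prodMk continuousAt_id
    rw [ContinuousAt, hγ0] at hcurve
    filter_upwards [hcurve.eventually hdiff] with t ht
    exact ht.hasFDerivAt.slice_left.fderiv.symm
  have hmoving :
      HasDerivAt (fun t => restrict (fderiv ℝ h (γ t, t))) (restrict (D2 (γ', 1))) 0 :=
    restrict.hasFDerivAt.comp_hasDerivAt 0
      (hD2.comp_hasDerivAt_of_eq 0 (hγ.prodMk (hasDerivAt_id 0)) (by rw [hγ0]))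
  -- `D2 (γ', 1) (u, 0) = D2 (u, 0) (γ', 0) + D2 (u, 0) (0, 1)`, and the first term vanishes
  have hderiv :
      restrict (D2 (γ', 1)) = fderiv ℝ (fun y => deriv (fun t => h (y, t)) 0) x := by
    rw [hh.hasFDerivAt_deriv_slice_right.fderiv]
    ext u
    have hsymm := hh.isSymmSndFDerivAt (by simp) (u, 0) (γ', 1)
    have hsplit : (γ', (1 : ℝ)) = (γ', 0) + (0, 1) := by simp
    show D2 (γ', 1) (u, 0) = D2 (u, 0) (0, 1)
    rw [← hsymm, hsplit, map_add, hD2_inl_inl, zero_add]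
  exact hderiv ▸ hmoving.congr_of_eventuallyEq hslices.symm

end Families

theorem ContDiffAt.hasDerivAt_adjoint_inverse_apply_gradient {E : Type*} [NormedAddCommGroup E]
    [InnerProductSpace ℝ E] [CompleteSpace E] {h : E × ℝ → E} {φ : E → ℝ} {x : E}
    (hh : ContDiffAt ℝ 2 h (x, 0)) (hh0 : ∀ y, h (y, 0) = y) (hφ : ContDiffAt ℝ 2 φ x)
    {γ : ℝ → E} (hγ : HasDerivAt γ (-deriv (fun t => h (x, t)) 0) 0) (hγ0 : γ 0 = x) :
    HasDerivAt
      (fun t => Ring.inverse (adjoint (fderiv ℝ (fun y => h (y, t)) (γ t))) (gradient φ (γ t)))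
      (-gradient (fun y => ⟪deriv (fun t => h (y, t)) 0, gradient φ y⟫) x) 0 := by
  have hA1 : fderiv ℝ (fun y => h (y, 0)) (γ 0) = 1 := by
    rw [funext hh0, fderiv_fun_id]; rfl
  have hν : HasDerivAt (fun t => gradient φ (γ t)) _ 0 :=
    hφ.hasFDerivAt_gradient.comp_hasDerivAt_of_eq 0 hγ hγ0.symm
  have hσ := hh.hasFDerivAt_deriv_slice_right.differentiableAt.hasFDerivAt
    |>.hasGradientAt_inner_gradient hφ
  convert (hh.hasDerivAt_fderiv_slice_left_comp hh0 hγ hγ0).ringInverse_adjoint_apply hA1 hν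
    using 1
  rw [hσ.gradient, hγ0, map_neg]
  abel

theorem variation_of_unit_normal_general
    {n : ℕ}
    (φ : EuclideanSpace ℝ (Fin n) → ℝ) (hφ : ContDiff ℝ 2 φ)
    (U : Set (EuclideanSpace ℝ (Fin n)))
    (hunit : ∀ x ∈ U, ‖gradient φ x‖ = 1)
    (ε : ℝ) (hε : 0 < ε)
    (h : EuclideanSpace ℝ (Fin n) × ℝ → EuclideanSpace ℝ (Fin n))
    (hh : ContDiffOn ℝ 2 h (Set.univ ×ˢ Set.Ioo (-ε) ε))
    (hh0 : ∀ x, h (x, 0) = x)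
    (g : EuclideanSpace ℝ (Fin n) × ℝ → EuclideanSpace ℝ (Fin n))
    (hg : ContDiffOn ℝ 1 g (Set.univ ×ˢ Set.Ioo (-ε) ε))
    (hgh : ∀ x, ∀ t ∈ Set.Ioo (-ε) ε, g (h (x, t), t) = x)
    (hdot : EuclideanSpace ℝ (Fin n) → EuclideanSpace ℝ (Fin n))
    (hhdot : ∀ x, hdot x = deriv (fun t => h (x, t)) 0)
    (σ : EuclideanSpace ℝ (Fin n) → ℝ)
    (hσ : ∀ x, σ x = ⟪hdot x, gradient φ x⟫)
    (w : EuclideanSpace ℝ (Fin n) × ℝ → EuclideanSpace ℝ (Fin n))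
    (hw : ∀ p, w p =
      Ring.inverse (ContinuousLinearMap.adjoint (fderiv ℝ (fun x' => h (x', p.2)) p.1))
        (gradient φ p.1))
    (N : EuclideanSpace ℝ (Fin n) × ℝ → EuclideanSpace ℝ (Fin n))
    (hN : ∀ p, gradient φ p.1 ≠ 0 → N p = ‖w p‖⁻¹ • w p) :
    ∀ x ∈ U,
      HasDerivAt (fun t => N (g (x, t), t))
        (-(gradient σ x - ⟪gradient σ x, gradient φ x⟫ • gradient φ x)) 0 := by
  intro x hx
  have hI : Ioo (-ε) ε ∈ 𝓝 0 := Ioo_mem_nhds (neg_neg_iff_pos.2 hε) hε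
  have hΩ : univ ×ˢ Ioo (-ε) ε ∈ 𝓝 (x, (0 : ℝ)) := prod_mem_nhds univ_mem hI
  have hhx : ContDiffAt ℝ 2 h (x, 0) := hh.contDiffAt hΩ
  have hg0 : ∀ y, g (y, 0) = y := fun y => by simpa [hh0] using hgh y 0 (mem_of_mem_nhds hI)
  have hh_time : HasDerivAt (fun t => h (x, t)) (deriv (fun t => h (x, t)) 0) 0 :=
    (hhx.differentiableAt two_ne_zero).hasFDerivAt.hasDerivAt_slice_right.differentiableAt
      |>.hasDerivAt
  have hγ : HasDerivAt (fun t => g (x, t)) (-deriv (fun t => h (x, t)) 0) 0 :=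
    hasDerivAt_inverseFamily ((hg.contDiffAt hΩ).differentiableAt one_ne_zero) hg0 hh_time (hh0 x)
      (mem_of_superset hI fun t ht => hgh x t ht)
  have hσ_eq : σ = fun y => ⟪deriv (fun t => h (y, t)) 0, gradient φ y⟫ :=
    funext fun y => by rw [hσ, hhdot]
  have hW : HasDerivAt (fun t => w (g (x, t), t)) (-gradient σ x) 0 := by
    simpa only [hw, hσ_eq] using
      hhx.hasDerivAt_adjoint_inverse_apply_gradient hh0 hφ.contDiffAt hγ (hg0 x)
  have hν0 : ‖gradient φ x‖ = 1 := hunit x hx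
  have hW0 : w (g (x, 0), 0) = gradient φ x := by
    simp only [hw, hg0, hh0, fderiv_fun_id, ← one_def, ← star_eq_adjoint, star_one,
      Ring.inverse_one, one_apply_eq_self]
  have hN_eq :
      (fun t => N (g (x, t), t)) =ᶠ[𝓝 0] fun t => ‖w (g (x, t), t)‖⁻¹ • w (g (x, t), t) :=
    (hφ.contDiffAt.hasFDerivAt_gradient.continuousAt.comp_of_eq hγ.continuousAt (hg0 x)
      |>.eventually_ne (by simp [hg0, ← norm_ne_zero_iff, hν0])).mono fun t ht => hN _ ht
  have hderiv : -gradient σ x - ⟪gradient φ x, -gradient σ x⟫ • gradient φ x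
      = -(gradient σ x - ⟪gradient σ x, gradient φ x⟫ • gradient φ x) := by
    rw [inner_neg_right, real_inner_comm]
    module
  rw [← hderiv, ← hW0]
  exact (hW.norm_inv_smul_of_norm_eq_one (by rw [hW0, hν0])).congr_of_eventuallyEq hN_eq

/-- Lemma 2.3: variation of the unit normal under boundary perturbation.
With `ν = ∇φ` of unit length on `U`, a perturbation family `h(·,t)` with
`h(·,0) = id` and invertible partial Jacobians, `g(·,t)` the inverse family,
`ḣ(x) = ∂ₜ h(x,0)`, `σ = ⟪ḣ, ν⟫` and
`N(x,t) = ((Dₓh(x,t))^*)⁻¹ ν(x) / ‖((Dₓh(x,t))^*)⁻¹ ν(x)‖` the perturbed unit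
normal, the curve `t ↦ N(g(x,t),t)` is differentiable at `t = 0` with
derivative `−(∇σ(x) − ⟪∇σ(x), ν(x)⟫ ν(x))`, the negative tangential gradient
of `σ`. -/
theorem variation_of_unit_normal
    {n : ℕ} (hn : 1 ≤ n)
    (φ : EuclideanSpace ℝ (Fin n) → ℝ) (hφ : ContDiff ℝ 2 φ)
    (U : Set (EuclideanSpace ℝ (Fin n))) (hU : IsOpen U)
    (hunit : ∀ x ∈ U, ‖gradient φ x‖ = 1)
    (ε : ℝ) (hε : 0 < ε)
    (h : EuclideanSpace ℝ (Fin n) × ℝ → EuclideanSpace ℝ (Fin n))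
    (hh : ContDiffOn ℝ 2 h (Set.univ ×ˢ Set.Ioo (-ε) ε))
    (hh0 : ∀ x, h (x, 0) = x)
    (hinv : ∀ x t, IsUnit (fderiv ℝ (fun x' => h (x', t)) x))
    (g : EuclideanSpace ℝ (Fin n) × ℝ → EuclideanSpace ℝ (Fin n))
    (hg : ContDiffOn ℝ 1 g (Set.univ ×ˢ Set.Ioo (-ε) ε))
    (hgh : ∀ x, ∀ t ∈ Set.Ioo (-ε) ε, g (h (x, t), t) = x)
    (hdot : EuclideanSpace ℝ (Fin n) → EuclideanSpace ℝ (Fin n))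
    (hhdot : ∀ x, hdot x = deriv (fun t => h (x, t)) 0)
    (σ : EuclideanSpace ℝ (Fin n) → ℝ)
    (hσ : ∀ x, σ x = ⟪hdot x, gradient φ x⟫)
    (w : EuclideanSpace ℝ (Fin n) × ℝ → EuclideanSpace ℝ (Fin n))
    (hw : ∀ p, w p =
      Ring.inverse (ContinuousLinearMap.adjoint (fderiv ℝ (fun x' => h (x', p.2)) p.1))
        (gradient φ p.1))
    (N : EuclideanSpace ℝ (Fin n) × ℝ → EuclideanSpace ℝ (Fin n))
    (hN : ∀ p, gradient φ p.1 ≠ 0 → N p = ‖w p‖⁻¹ • w p) :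
    ∀ x ∈ U,
      HasDerivAt (fun t => N (g (x, t), t))
        (-(gradient σ x - ⟪gradient σ x, gradient φ x⟫ • gradient φ x)) 0 :=
  variation_of_unit_normal_general φ hφ U hunit ε hε h hh hh0 g hg hgh hdot hhdot σ hσ w hw N hN
end

section
/- Lemma 3.1 (variation of harmonic extensions with respect to the boundary): Let n ≥ 1 and let Ω ⊆ ℝⁿ be a bounded open set with frontier ∂Ω. Let ε > 0 and let h : ℝⁿ × (−ε, ε) → ℝⁿ be continuous with h(x, 0) = x for all x, such that for each x ∈ ℝⁿ the map t ↦ h(x, t) is differentiable at t = 0; set ḣ(x) = ∂_t h(x, 0). Let W ⊆ ℝⁿ × ℝ be an open set containing (closure Ω) × {0} and let U : ℝⁿ × ℝ → ℝ be C³ on W. Assume: (i) there is an open set V with Ω × {0} ⊆ V ⊆ W such that Δ_y U(y, t) = 0 for all (y, t) ∈ V, where Δ_y denotes the Laplacian in the first variable; (ii) U(h(x, t), t) = U(x, 0) for every x ∈ ∂Ω and every t ∈ (−ε, ε) with (h(x, t), t) ∈ W. Define v(x) = ∂_t U(x, 0) (partial derivative in the second variable) for x with (x, 0) ∈ W. Then: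 (a) v is harmonic on Ω, i.e. v is C² on Ω with Δv = 0 on Ω; and (b) v(x) = −⟨∇_y U(x, 0), ḣ(x)⟩ for every x ∈ ∂Ω, where ∇_y U(·, 0) denotes the gradient in the first variable. -/
/-! Differentiating the harmonicity identity `Δ_y U(y, t) = 0` in `t` gives `Δ_y ∂_t U = 0`:
for a `C³` function the third derivative is symmetric, so `∂_t` commutes with the pure second
derivatives in `y`. On `∂Ω` the function `t ↦ U(h(x, t), t)` is locally constant, and the chain
rule at `t = 0` gives `⟪∇_y U(x, 0), ḣ(x)⟫ + ∂_t U(x, 0) = 0`. -/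

open Set Filter
open scoped RealInnerProductSpace Topology

/-- The Laplacian of `f : ℝⁿ → ℝ`, as the sum of the pure second derivatives
(the trace of the Hessian). -/
noncomputable def laplacian {n : ℕ} (f : EuclideanSpace ℝ (Fin n) → ℝ)
    (x : EuclideanSpace ℝ (Fin n)) : ℝ :=
  ∑ i : Fin n, iteratedFDeriv ℝ 2 f x ![EuclideanSpace.single i 1, EuclideanSpace.single i 1]

section Slices

variable {X E F G : Type*} [NormedAddCommGroup X] [NormedSpace ℝ X]
  [NormedAddCommGroup E] [NormedSpace ℝ E] [NormedAddCommGroup F] [NormedSpace ℝ F]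
  [NormedAddCommGroup G] [NormedSpace ℝ G]

theorem DifferentiableAt.hasFDerivAt_comp_prodMk_left {U : E × F → G} {y : E} {t : F}
    (hU : DifferentiableAt ℝ U (y, t)) :
    HasFDerivAt (fun y' => U (y', t)) ((fderiv ℝ U (y, t)).comp (.inl ℝ E F)) y :=
  hU.hasFDerivAt.comp y (hasFDerivAt_prodMk_left y t)

theorem DifferentiableAt.hasDerivAt_comp_prodMk_right {U : E × ℝ → G} {y : E} {t : ℝ}
    (hU : DifferentiableAt ℝ U (y, t)) :
    HasDerivAt (fun s => U (y, s)) (fderiv ℝ U (y, t) (0, 1)) t :=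
  hU.hasFDerivAt.comp_hasDerivAt t ((hasDerivAt_const t y).prodMk (hasDerivAt_id t))

theorem ContDiffAt.fderiv_fderiv_comp_prodMk_left {U : E × F → G} {y : E} {t : F}
    (hU : ContDiffAt ℝ 2 U (y, t)) (a b : E) :
    fderiv ℝ (fderiv ℝ fun y' => U (y', t)) y a b =
      fderiv ℝ (fderiv ℝ U) (y, t) (a, 0) (b, 0) := by
  set restrict : (E × F →L[ℝ] G) →L[ℝ] E →L[ℝ] G := .precomp G (.inl ℝ E F)
  have hnear : ∀ᶠ y' in 𝓝 y, ContDiffAt ℝ 2 U (y', t) :=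
    (continuous_id.prodMk continuous_const).continuousAt.tendsto.eventually
      (hU.eventually (by simp))
  have hslice : (fderiv ℝ fun y' => U (y', t)) =ᶠ[𝓝 y]
      fun y' => restrict (fderiv ℝ U (y', t)) := by
    filter_upwards [hnear] with y' hy'
    exact (hy'.differentiableAt two_ne_zero).hasFDerivAt_comp_prodMk_left.fderiv
  have hD : HasFDerivAt (fun y' => restrict (fderiv ℝ U (y', t)))
      (restrict.comp ((fderiv ℝ (fderiv ℝ U) (y, t)).comp (.inl ℝ E F))) y :=
    restrict.hasFDerivAt.comp y
      ((hU.fderiv_right (m := 1) le_rfl).differentiableAt one_ne_zero).hasFDerivAt_comp_prodMk_left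
  rw [hslice.fderiv_eq, hD.fderiv]
  simp [restrict]

theorem DifferentiableAt.fderiv_clm_apply_apply {B : X → E →L[ℝ] F →L[ℝ] G} {p : X}
    (hB : DifferentiableAt ℝ B p) (a : E) (b : F) (c : X) :
    fderiv ℝ (fun q => B q a b) p c = fderiv ℝ B p c a b := by
  have happly := (hB.hasFDerivAt.clm_apply (hasFDerivAt_const a p)).clm_apply
    (hasFDerivAt_const b p)
  rw [happly.fderiv]
  simp

theorem ContDiffAt.fderiv_fderiv_fderiv_rotate {U : X → G} {p : X} (hU : ContDiffAt ℝ 3 U p)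
    (a b c : X) :
    fderiv ℝ (fderiv ℝ (fderiv ℝ U)) p a b c =
      fderiv ℝ (fderiv ℝ (fderiv ℝ U)) p b c a := by
  have hDU : ContDiffAt ℝ 2 (fderiv ℝ U) p := hU.fderiv_right le_rfl
  have hD2U : DifferentiableAt ℝ (fderiv ℝ (fderiv ℝ U)) p :=
    (hDU.fderiv_right (m := 1) le_rfl).differentiableAt one_ne_zero
  -- The first two slots are swapped by the symmetry of the second derivative of `fderiv U` at
  -- `p`, the last two by differentiating the symmetry of that of `U` near `p`.
  have hswap₁₂ : fderiv ℝ (fderiv ℝ (fderiv ℝ U)) p a b c =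
      fderiv ℝ (fderiv ℝ (fderiv ℝ U)) p b a c :=
    congrArg (· c) (hDU.isSymmSndFDerivAt (by simp) a b)
  have hswap₂₃ : (fun q => fderiv ℝ (fderiv ℝ U) q a c) =ᶠ[𝓝 p]
      fun q => fderiv ℝ (fderiv ℝ U) q c a := by
    filter_upwards [hU.eventually (by simp)] with q hq
    exact hq.isSymmSndFDerivAt (by norm_num) a c
  rw [hswap₁₂, ← hD2U.fderiv_clm_apply_apply, ← hD2U.fderiv_clm_apply_apply,
    hswap₂₃.fderiv_eq]

theorem laplacian_fderiv_snd_eq_zero {n : ℕ} {U : EuclideanSpace ℝ (Fin n) × F → ℝ}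
    {V : Set (EuclideanSpace ℝ (Fin n) × F)}
    (hV : IsOpen V) (hU : ContDiffOn ℝ 3 U V)
    (hharm : ∀ p ∈ V, laplacian (fun y => U (y, p.2)) p.1 = 0)
    {x : EuclideanSpace ℝ (Fin n)} {t : F} (hxt : (x, t) ∈ V) (w : F) :
    laplacian (fun y => fderiv ℝ U (y, t) (0, w)) x = 0 := by
  set e : Fin n → EuclideanSpace ℝ (Fin n) × F := fun i => (EuclideanSpace.single i 1, 0)
  have hC3 : ∀ q ∈ V, ContDiffAt ℝ 3 U q := fun q hq => hU.contDiffAt (hV.mem_nhds hq)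
  have hslice : ∀ q ∈ V, laplacian (fun y => U (y, q.2)) q.1 =
      ∑ i, fderiv ℝ (fderiv ℝ U) q (e i) (e i) := by
    rintro ⟨y, s⟩ hq
    refine Finset.sum_congr rfl fun i _ => ?_
    rw [iteratedFDeriv_two_apply]
    exact ((hC3 _ hq).of_le (by norm_num)).fderiv_fderiv_comp_prodMk_left _ _
  have hD2 : DifferentiableAt ℝ (fderiv ℝ (fderiv ℝ U)) (x, t) :=
    ((hC3 _ hxt).fderiv_right (m := 2) le_rfl).fderiv_right (m := 1) le_rfl
      |>.differentiableAt one_ne_zero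
  have htrace : ∑ i, fderiv ℝ (fderiv ℝ (fderiv ℝ U)) (x, t) (0, w) (e i) (e i) = 0 := by
    have hzero : (fun q => ∑ i, fderiv ℝ (fderiv ℝ U) q (e i) (e i)) =ᶠ[𝓝 (x, t)]
        fun _ => 0 := by
      filter_upwards [hV.mem_nhds hxt] with q hq
      rw [← hslice q hq, hharm q hq]
    have hterm : ∀ i ∈ Finset.univ,
        DifferentiableAt ℝ (fun q => fderiv ℝ (fderiv ℝ U) q (e i) (e i)) (x, t) :=
      fun i _ => (hD2.clm_apply (differentiableAt_const _)).clm_apply (differentiableAt_const _)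
    have := DFunLike.congr_fun (hzero.fderiv_eq (𝕜 := ℝ)) (0, w)
    simpa [fderiv_fun_sum hterm, hD2.fderiv_clm_apply_apply] using this
  have hDU : ContDiffAt ℝ 2 (fderiv ℝ U) (x, t) := (hC3 _ hxt).fderiv_right le_rfl
  have hsliceDU : ContDiffAt ℝ 2 (fun y => fderiv ℝ U (y, t)) x :=
    hDU.comp x (contDiffAt_id.prodMk contDiffAt_const)
  calc laplacian (fun y => fderiv ℝ U (y, t) (0, w)) x
      = ∑ i, fderiv ℝ (fderiv ℝ (fderiv ℝ U)) (x, t) (e i) (e i) (0, w) := by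
        refine Finset.sum_congr rfl fun i _ => ?_
        change iteratedFDeriv ℝ 2 (ContinuousLinearMap.apply ℝ ℝ (0, w) ∘ _) x _ = _
        rw [ContinuousLinearMap.iteratedFDeriv_comp_left _ hsliceDU le_rfl]
        simp [iteratedFDeriv_two_apply, hDU.fderiv_fderiv_comp_prodMk_left, e]
    _ = ∑ i, fderiv ℝ (fderiv ℝ (fderiv ℝ U)) (x, t) (0, w) (e i) (e i) := by
        refine Finset.sum_congr rfl fun i _ => ?_
        rw [(hC3 _ hxt).fderiv_fderiv_fderiv_rotate (0, w)]
    _ = 0 := htrace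

end Slices

theorem Filter.EventuallyEq.laplacian_eq {n : ℕ} {f g : EuclideanSpace ℝ (Fin n) → ℝ}
    {x : EuclideanSpace ℝ (Fin n)} (hfg : f =ᶠ[𝓝 x] g) : laplacian f x = laplacian g x := by
  simp only [laplacian, (hfg.iteratedFDeriv ℝ 2).eq_of_nhds]

theorem deriv_snd_eq_neg_inner_gradient {E : Type*} [NormedAddCommGroup E]
    [InnerProductSpace ℝ E] [CompleteSpace E] {U : E × ℝ → ℝ} {γ : ℝ → E} {x γ' : E}
    (hU : DifferentiableAt ℝ U (x, 0)) (hγ : HasDerivAt γ γ' 0) (hγ0 : γ 0 = x)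
    (hconst : ∀ᶠ t in 𝓝 0, U (γ t, t) = U (x, 0)) :
    deriv (fun t => U (x, t)) 0 = -⟪gradient (fun y => U (y, 0)) x, γ'⟫ := by
  have hcurve : HasDerivAt (fun t => U (γ t, t)) (fderiv ℝ U (x, 0) (γ', 1)) 0 :=
    hU.hasFDerivAt.comp_hasDerivAt_of_eq 0 (hγ.prodMk (hasDerivAt_id 0)) (by rw [hγ0])
  have hzero : fderiv ℝ U (x, 0) (γ', 1) = 0 :=
    hcurve.unique ((hasDerivAt_const 0 (U (x, 0))).congr_of_eventuallyEq hconst)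
  have hsplit : fderiv ℝ U (x, 0) (γ', 1) =
      fderiv ℝ U (x, 0) (γ', 0) + fderiv ℝ U (x, 0) (0, 1) := by
    rw [← map_add, Prod.mk_add_mk, add_zero, zero_add]
  rw [hU.hasDerivAt_comp_prodMk_right.deriv, inner_gradient_left,
    hU.hasFDerivAt_comp_prodMk_left.fderiv, ContinuousLinearMap.comp_apply,
    ContinuousLinearMap.inl_apply]
  linarith

theorem variation_harmonic_extension_general
    {n : ℕ}
    (Ω : Set (EuclideanSpace ℝ (Fin n)))
    (hΩopen : IsOpen Ω)
    (ε : ℝ) (hε : 0 < ε)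
    (h : EuclideanSpace ℝ (Fin n) × ℝ → EuclideanSpace ℝ (Fin n))
    (hh0 : ∀ x, h (x, 0) = x)
    (hhdiff : ∀ x, DifferentiableAt ℝ (fun t => h (x, t)) 0)
    (hdot : EuclideanSpace ℝ (Fin n) → EuclideanSpace ℝ (Fin n))
    (hhdot : ∀ x, hdot x = deriv (fun t => h (x, t)) 0)
    (W : Set (EuclideanSpace ℝ (Fin n) × ℝ)) (hW : IsOpen W)
    (hWcl : closure Ω ×ˢ ({0} : Set ℝ) ⊆ W)
    (U : EuclideanSpace ℝ (Fin n) × ℝ → ℝ) (hU : ContDiffOn ℝ 3 U W)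
    (V : Set (EuclideanSpace ℝ (Fin n) × ℝ)) (hV : IsOpen V)
    (hΩV : Ω ×ˢ ({0} : Set ℝ) ⊆ V) (hVW : V ⊆ W)
    (hharm : ∀ p ∈ V, laplacian (fun y => U (y, p.2)) p.1 = 0)
    (hbdry : ∀ x ∈ frontier Ω, ∀ t ∈ Set.Ioo (-ε) ε, (h (x, t), t) ∈ W →
      U (h (x, t), t) = U (x, 0))
    (v : EuclideanSpace ℝ (Fin n) → ℝ)
    (hv : ∀ x, v x = deriv (fun t => U (x, t)) 0) :
    (ContDiffOn ℝ 2 v Ω ∧ ∀ x ∈ Ω, laplacian v x = 0) ∧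
    ∀ x ∈ frontier Ω, v x = -⟪gradient (fun y => U (y, 0)) x, hdot x⟫ := by
  have hUdiff : ∀ p ∈ W, DifferentiableAt ℝ U p := fun p hp =>
    (hU.contDiffAt (hW.mem_nhds hp)).differentiableAt (by norm_num)
  have hΩW : ∀ x ∈ Ω, (x, (0 : ℝ)) ∈ W := fun x hx => hWcl ⟨subset_closure hx, rfl⟩
  have hvΩ : EqOn v (fun y => fderiv ℝ U (y, 0) (0, 1)) Ω := fun x hx =>
    (hv x).trans (hUdiff _ (hΩW x hx)).hasDerivAt_comp_prodMk_right.deriv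
  refine ⟨⟨?_, fun x hx => ?_⟩, fun x hx => ?_⟩
  · refine ContDiffOn.congr ?_ hvΩ
    exact ((hU.fderiv_of_isOpen hW (by norm_num)).comp (contDiffOn_id.prodMk contDiffOn_const)
      hΩW).clm_apply contDiffOn_const
  · rw [(Filter.eventuallyEq_of_mem (hΩopen.mem_nhds hx) hvΩ).laplacian_eq]
    exact laplacian_fderiv_snd_eq_zero hV (hU.mono hVW) hharm (hΩV ⟨hx, rfl⟩) 1
  · have hxW : (x, (0 : ℝ)) ∈ W := hWcl ⟨frontier_subset_closure hx, rfl⟩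
    have hγ : HasDerivAt (fun t => h (x, t)) (hdot x) 0 := hhdot x ▸ (hhdiff x).hasDerivAt
    have hnearW : ∀ᶠ t in 𝓝 (0 : ℝ), (h (x, t), t) ∈ W :=
      (hγ.continuousAt.prodMk continuousAt_id).eventually_mem
        (by simpa [hh0] using hW.mem_nhds hxW)
    have hconst : ∀ᶠ t in 𝓝 (0 : ℝ), U (h (x, t), t) = U (x, 0) := by
      filter_upwards [hnearW, Ioo_mem_nhds (neg_neg_of_pos hε) hε] with t htW htε
      exact hbdry x hx t htε htW
    rw [hv]
    exact deriv_snd_eq_neg_inner_gradient (hUdiff _ hxW) hγ (hh0 x) hconst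

/-- Lemma 3.1: variation of harmonic extensions with respect to the boundary.
If `U(·,t)` is harmonic near `Ω × {0}` and `U(h(x,t),t)` is constant in `t`
for `x ∈ ∂Ω`, then `v = ∂ₜU(·,0)` is harmonic on `Ω` and
`v = −⟪∇U(·,0), ḣ⟫` on `∂Ω`. -/
theorem variation_harmonic_extension
    {n : ℕ} (hn : 1 ≤ n)
    (Ω : Set (EuclideanSpace ℝ (Fin n)))
    (hΩopen : IsOpen Ω) (hΩbdd : Bornology.IsBounded Ω)
    (ε : ℝ) (hε : 0 < ε)
    (h : EuclideanSpace ℝ (Fin n) × ℝ → EuclideanSpace ℝ (Fin n))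
    (hhcont : ContinuousOn h (Set.univ ×ˢ Set.Ioo (-ε) ε))
    (hh0 : ∀ x, h (x, 0) = x)
    (hhdiff : ∀ x, DifferentiableAt ℝ (fun t => h (x, t)) 0)
    (hdot : EuclideanSpace ℝ (Fin n) → EuclideanSpace ℝ (Fin n))
    (hhdot : ∀ x, hdot x = deriv (fun t => h (x, t)) 0)
    (W : Set (EuclideanSpace ℝ (Fin n) × ℝ)) (hW : IsOpen W)
    (hWcl : closure Ω ×ˢ ({0} : Set ℝ) ⊆ W)
    (U : EuclideanSpace ℝ (Fin n) × ℝ → ℝ) (hU : ContDiffOn ℝ 3 U W)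
    (V : Set (EuclideanSpace ℝ (Fin n) × ℝ)) (hV : IsOpen V)
    (hΩV : Ω ×ˢ ({0} : Set ℝ) ⊆ V) (hVW : V ⊆ W)
    (hharm : ∀ p ∈ V, laplacian (fun y => U (y, p.2)) p.1 = 0)
    (hbdry : ∀ x ∈ frontier Ω, ∀ t ∈ Set.Ioo (-ε) ε, (h (x, t), t) ∈ W →
      U (h (x, t), t) = U (x, 0))
    (v : EuclideanSpace ℝ (Fin n) → ℝ)
    (hv : ∀ x, v x = deriv (fun t => U (x, t)) 0) :
    (ContDiffOn ℝ 2 v Ω ∧ ∀ x ∈ Ω, laplacian v x = 0) ∧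
    ∀ x ∈ frontier Ω, v x = -⟪gradient (fun y => U (y, 0)) x, hdot x⟫ :=
  variation_harmonic_extension_general Ω hΩopen ε hε h hh0 hhdiff hdot hhdot W hW hWcl U hU V hV hΩV
    hVW hharm hbdry v hv
end
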